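/- arXiv:2302.01418 — 2 statements merged into one kernel-verified Lean document; each statement's English description precedes it below -/
import Mathlib

section
/- Let V be a finite-dimensional complex vector space, α, ε ∈ End(V), and a : V → W a linear map to another vector space. Suppose [ε, α] = 0 and a∘ε = γ∘a for some nilpotent γ ∈ End(W) with γ^l = 0. If the pair (α, a) is stable in the sense that any subspace V' ⊆ V with α(V') ⊆ V' and V' ⊆ ker(a) is zero, then ε is nilpotent; in fact ε^l = 0. -/
/-- Let `α, ε ∈ End(V)` commute, `a : V → W`, and `γ ∈ End(W)` with `γ^l = 0` and
`a ∘ ε = γ ∘ a`.  If the pair `(α, a)` is stable (every `α`-invariant subspace of `V`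
contained in `ker a` is zero), then `ε^l = 0`. -/
theorem nilpotent_of_stable (V W : Type*) [AddCommGroup V] [Module ℂ V]
    [FiniteDimensional ℂ V] [AddCommGroup W] [Module ℂ W] [FiniteDimensional ℂ W]
    (α ε : Module.End ℂ V) (a : V →ₗ[ℂ] W) (γ : Module.End ℂ W) (l : ℕ)
    (hcomm : ε * α = α * ε) (hγ : γ ^ l = 0) (hint : a ∘ₗ ε = γ ∘ₗ a)
    (hstable : ∀ V' : Submodule ℂ V,
      (∀ v ∈ V', α v ∈ V') → V' ≤ LinearMap.ker a → V' = ⊥) :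
    ε ^ l = 0 := by
  have hint' : ∀ v, a (ε v) = γ (a v) := fun v => congrArg (fun f => f v) hint
  have hintn : ∀ n v, a ((ε ^ n) v) = (γ ^ n) (a v) := by
    intro n
    induction n with
    | zero => simp
    | succ k ih =>
      intro v
      simp only [pow_succ, Module.End.mul_apply, ih, hint']
  have hcommn : ε ^ l * α = α * ε ^ l := (Commute.pow_left hcomm l)
  have hrange : LinearMap.range (ε ^ l) = ⊥ := by
    apply hstable
    · rintro v ⟨w, rfl⟩
      refine ⟨α w, ?_⟩
      have := congrArg (fun f => f w) hcommn
      simpa [Module.End.mul_apply] using this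
    · rintro v ⟨w, rfl⟩
      simp [LinearMap.mem_ker, hintn, hγ]
  ext v
  have : (ε ^ l) v ∈ LinearMap.range (ε ^ l) := ⟨v, rfl⟩
  rw [hrange] at this
  simpa using this
end

section
/- For the ring ℤ[Y_{i,k}^{±1} : (i,k) ∈ I×ℤ] of Laurent polynomials indexed by I×ℤ, define a monomial m = ∏ Y_{i,k}^{u_{i,k}} (finitely supported u ∈ ℤ^{I×ℤ}) to be right-negative if u_{i,N} ≤ 0 for all i ∈ I, where N = max{k : ∃i, u_{i,k} ≠ 0}. Define A_{i,k} = Y_{i,k+1} Y_{i,k-1} ∏_{j : c_{ij}<0} Y_{j,k}^{c_{ij}} (with c a symmetric Cartan matrix, c_{ii}=2, c_{ij}≤0 for i≠j). Then if m is right-negative and m' = m · ∏ A_{j,r}^{-n_{j,r}} with all n_{j,r} ≥ 0, m' is right-negative. In particular a right-negative monomial is not dominant (i.e. not all exponents nonnegative). -/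
/-- The exponent vector of `A_{i,k} = Y_{i,k+1} Y_{i,k-1} ∏_{j : c_{ij} < 0} Y_{j,k}^{c_{ij}}`. -/
noncomputable def Avec {I : Type*} [Fintype I] (c : I → I → ℤ) (i : I) (k : ℤ) :
    (I × ℤ) →₀ ℤ :=
  Finsupp.single (i, k + 1) 1 + Finsupp.single (i, k - 1) 1 +
    ∑ j : I, if c i j < 0 then Finsupp.single (j, k) (c i j) else 0

/-- A monomial `∏ Y_{i,k}^{u_{i,k}}` (a finitely supported exponent vector `u`) is
right-negative if at the maximal height `N` appearing in its support all exponents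
are `≤ 0` (and some entry at height `N` is nonzero). -/
def RightNegative {I : Type*} (u : (I × ℤ) →₀ ℤ) : Prop :=
  ∃ N : ℤ, (∃ j : I, u (j, N) ≠ 0) ∧ (∀ (j : I) (k : ℤ), u (j, k) ≠ 0 → k ≤ N) ∧
    (∀ i : I, u (i, N) ≤ 0)

/-- A monomial is dominant if all its exponents are nonnegative. -/
def DominantMon {I : Type*} (u : (I × ℤ) →₀ ℤ) : Prop := ∀ p : I × ℤ, 0 ≤ u p

/-- Strictly above height `r+1`, `Avec c j r` vanishes. -/
lemma Avec_zero_high {I : Type*} [Fintype I] (c : I → I → ℤ) (j : I) (r : ℤ) (i : I) (k : ℤ)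
    (h : r + 1 < k) : Avec c j r (i, k) = 0 := by
  classical
  have hsum : (∑ j' : I, if c j j' < 0 then Finsupp.single (j', r) (c j j') else 0) (i, k)
      = 0 := by
    rw [Finsupp.finset_sum_apply]
    refine Finset.sum_eq_zero fun j' _ => ?_
    split
    · rw [Finsupp.single_apply, if_neg]
      intro heq
      have : r = k := congrArg Prod.snd heq
      omega
    · rfl
  simp only [Avec, Finsupp.add_apply, hsum, add_zero, Finsupp.single_apply]
  have h1 : ¬ ((j, r + 1) : I × ℤ) = (i, k) := by
    intro heq; have := congrArg Prod.snd heq; simp only [] at this; omega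
  have h2 : ¬ ((j, r - 1) : I × ℤ) = (i, k) := by
    intro heq; have := congrArg Prod.snd heq; simp only [] at this; omega
  rw [if_neg h1, if_neg h2]
  norm_num

/-- At height `≥ r+1`, `Avec c j r` is nonnegative. -/
lemma Avec_nonneg_high {I : Type*} [Fintype I] (c : I → I → ℤ) (j : I) (r : ℤ) (i : I) (k : ℤ)
    (h : r + 1 ≤ k) : 0 ≤ Avec c j r (i, k) := by
  classical
  rcases lt_or_eq_of_le h with h' | h'
  · rw [Avec_zero_high c j r i k h']
  · have hsum : (∑ j' : I, if c j j' < 0 then Finsupp.single (j', r) (c j j') else 0) (i, k)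
        = 0 := by
      rw [Finsupp.finset_sum_apply]
      refine Finset.sum_eq_zero fun j' _ => ?_
      split
      · rw [Finsupp.single_apply, if_neg]
        intro heq
        have : r = k := congrArg Prod.snd heq
        omega
      · rfl
    simp only [Avec, Finsupp.add_apply, hsum, add_zero, Finsupp.single_apply]
    have h2 : ¬ ((j, r - 1) : I × ℤ) = (i, k) := by
      intro heq; have := congrArg Prod.snd heq; simp only [] at this; omega
    rw [if_neg h2]
    split <;> norm_num

/-- The top entry of `Avec c j r` is `1`. -/
lemma Avec_top {I : Type*} [Fintype I] (c : I → I → ℤ) (j : I) (r : ℤ) :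
    Avec c j r (j, r + 1) = 1 := by
  classical
  have hsum : (∑ j' : I, if c j j' < 0 then Finsupp.single (j', r) (c j j') else 0) (j, r + 1)
      = 0 := by
    rw [Finsupp.finset_sum_apply]
    refine Finset.sum_eq_zero fun j' _ => ?_
    split
    · rw [Finsupp.single_apply, if_neg]
      intro heq
      have : r = r + 1 := congrArg Prod.snd heq
      omega
    · rfl
  simp only [Avec, Finsupp.add_apply, hsum, add_zero, Finsupp.single_apply]
  have h2 : ¬ ((j, r - 1) : I × ℤ) = (j, r + 1) := by
    intro heq; have := congrArg Prod.snd heq; simp only [] at this; omega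
  rw [if_neg h2]
  norm_num

/-- If `m` is right-negative then `m · ∏ A_{j,r}^{-n_{j,r}}` (with all `n_{j,r} ≥ 0`)
is right-negative; in particular a right-negative monomial is not dominant. -/
theorem rightNegative_mul_inv_A {I : Type*} [Fintype I] (c : I → I → ℤ)
    (hsym : ∀ i j, c i j = c j i) (hdiag : ∀ i, c i i = 2)
    (hoff : ∀ i j, i ≠ j → c i j ≤ 0)
    (m : (I × ℤ) →₀ ℤ) (n : (I × ℤ) →₀ ℕ) (hm : RightNegative m) :
    RightNegative (m - n.sum fun p np => (np : ℤ) • Avec c p.1 p.2) ∧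
      ¬ DominantMon m := by
  obtain ⟨N, ⟨j0, hj0⟩, hbd, hneg⟩ := hm
  have hnotdom : ¬ DominantMon m := by
    intro hd
    have h1 := hd (j0, N)
    have h2 := hneg j0
    omega
  refine ⟨?_, hnotdom⟩
  set S := n.sum fun p np => (np : ℤ) • Avec c p.1 p.2 with hSdef
  have hSapp : ∀ i k, S (i, k) = ∑ p ∈ n.support, (n p : ℤ) * Avec c p.1 p.2 (i, k) := by
    intro i k
    rw [hSdef, Finsupp.sum, Finsupp.finset_sum_apply]
    simp [Finsupp.smul_apply]
  by_cases hn : n = 0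
  · subst hn
    simp only [hSdef, Finsupp.sum_zero_index, sub_zero]
    exact ⟨N, ⟨j0, hj0⟩, hbd, hneg⟩
  · have hsupp : n.support.Nonempty := Finsupp.support_nonempty_iff.mpr hn
    set T := n.support.image Prod.snd with hT
    have hTne : T.Nonempty := hsupp.image _
    set R0 := T.max' hTne with hR0
    have hle : ∀ p ∈ n.support, p.2 ≤ R0 := fun p hp =>
      Finset.le_max' _ _ (Finset.mem_image_of_mem _ hp)
    obtain ⟨p1, hp1, hp1R⟩ := Finset.mem_image.mp (T.max'_mem hTne)
    set N' := max N (R0 + 1) with hN'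
    have hS_nonneg : ∀ i, 0 ≤ S (i, N') := by
      intro i
      rw [hSapp]
      refine Finset.sum_nonneg fun p hp => ?_
      exact mul_nonneg (by positivity)
        (Avec_nonneg_high c p.1 p.2 i N' (by have := hle p hp; omega))
    have hS_zero : ∀ i k, N' < k → S (i, k) = 0 := by
      intro i k hk
      rw [hSapp]
      refine Finset.sum_eq_zero fun p hp => ?_
      rw [Avec_zero_high c p.1 p.2 i k (by have := hle p hp; omega), mul_zero]
    have hm_zero : ∀ i k, N < k → m (i, k) = 0 := by
      intro i k hk
      by_contra h
      exact absurd (hbd i k h) (by omega)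
    refine ⟨N', ?_, ?_, ?_⟩
    · -- some nonzero entry at height N'
      rcases le_or_gt (R0 + 1) N with h | h
      · have hNN : N' = N := by omega
        refine ⟨j0, ?_⟩
        rw [Finsupp.sub_apply, hNN]
        have h1 := hneg j0
        have h2 := hS_nonneg j0
        rw [hNN] at h2
        omega
      · have hNN : N' = R0 + 1 := by omega
        refine ⟨p1.1, ?_⟩
        rw [Finsupp.sub_apply]
        have hm0 : m (p1.1, N') = 0 := hm_zero _ _ (by omega)
        have hSpos : 0 < S (p1.1, N') := by
          rw [hSapp]
          refine Finset.sum_pos' (fun p hp => ?_) ⟨p1, hp1, ?_⟩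
          · exact mul_nonneg (by positivity)
              (Avec_nonneg_high c p.1 p.2 p1.1 N' (by have := hle p hp; omega))
          · have hpair : ((p1.1, N') : I × ℤ) = (p1.1, p1.2 + 1) := by
              rw [Prod.mk.injEq]
              exact ⟨rfl, by omega⟩
            rw [hpair, Avec_top, mul_one]
            have := Finsupp.mem_support_iff.mp hp1
            positivity
        omega
    · -- bound on the support
      intro j k hk
      by_contra h
      push_neg at h
      rw [Finsupp.sub_apply, hm_zero _ _ (by omega), hS_zero _ _ (by omega)] at hk
      simp at hk
    · -- nonpositivity at N'
      intro i
      rw [Finsupp.sub_apply]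
      have h2 := hS_nonneg i
      rcases le_or_gt (R0 + 1) N with h | h
      · have hNN : N' = N := by omega
        have h1 := hneg i
        rw [hNN] at h2 ⊢
        omega
      · have h1 : m (i, N') = 0 := hm_zero _ _ (by omega)
        omega
end
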